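/- arXiv:1203.2345 — 5 statements merged into one kernel-verified Lean document; each statement's English description precedes it below -/
import Mathlib

section
/- Let M₀ be a partial linear space and G a cyclic group that is either infinite or of even order greater than 2. Then the map κ = (κ', κ'') defined on ⊛_G(∘, M₀) by κ'((i,x)) = [1−i, x] on points and κ''([i,y]) = (1−i, y) on lines is an involutive correlation of ⊛_G(∘, M₀); consequently ⊛_G(∘, M₀) is self-dual. -/
/-- A partial linear space: every line has at least two points, every point is on
at least two lines, and two distinct points are on at most one common line. -/
def IsPLS {P L : Type*} (inc : P → L → Prop) : Prop :=
  (∀ l, ∃ a b, a ≠ b ∧ inc a l ∧ inc b l) ∧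
  (∀ a, ∃ l m, l ≠ m ∧ inc a l ∧ inc a m) ∧
  (∀ a b l m, inc a l → inc b l → inc a m → inc b m → a = b ∨ l = m)

/-- An isomorphism of incidence structures. -/
structure IncIso {P₁ L₁ P₂ L₂ : Type*} (inc₁ : P₁ → L₁ → Prop) (inc₂ : P₂ → L₂ → Prop) where
  pt : P₁ ≃ P₂
  ln : L₁ ≃ L₂
  pres : ∀ a l, inc₁ a l ↔ inc₂ (pt a) (ln l)

/-- A correlation of one incidence structure onto another: a pair of bijections,
points to lines and lines to points, reversing incidence. -/
structure Correlation {P₀ L₀ P₁ L₁ : Type*} (inc₀ : P₀ → L₀ → Prop) (inc₁ : P₁ → L₁ → Prop) where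
  toLines : P₀ ≃ L₁
  toPoints : L₀ ≃ P₁
  rev : ∀ a l, inc₀ a l ↔ inc₁ (toPoints l) (toLines a)

/-- A closed substructure. -/
def IsClosedSub {P L : Type*} (inc : P → L → Prop) (B' : Set P) (B'' : Set L) : Prop :=
  (∀ a₁ a₂ l, a₁ ∈ B' → a₂ ∈ B' → a₁ ≠ a₂ → inc a₁ l → inc a₂ l → l ∈ B'') ∧
  (∀ l₁ l₂ a, l₁ ∈ B'' → l₂ ∈ B'' → l₁ ≠ l₂ → inc a l₁ → inc a l₂ → a ∈ B')

/-- One incidence step (within a substructure) between elements (points or lines). -/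
def IncStep {P L : Type*} (inc : P → L → Prop) (B' : Set P) (B'' : Set L) :
    (P ⊕ L) → (P ⊕ L) → Prop :=
  fun x y => ∃ a l, a ∈ B' ∧ l ∈ B'' ∧ inc a l ∧
    ((x = Sum.inl a ∧ y = Sum.inr l) ∨ (x = Sum.inr l ∧ y = Sum.inl a))

/-- Connectivity of a substructure: any two of its elements are joined by a finite
chain of incidences within it. -/
def SubConnected {P L : Type*} (inc : P → L → Prop) (B' : Set P) (B'' : Set L) : Prop :=
  ∀ x y : P ⊕ L, Sum.elim (· ∈ B') (· ∈ B'') x → Sum.elim (· ∈ B') (· ∈ B'') y →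
    Relation.ReflTransGen (IncStep inc B' B'') x y

/-- Connectivity of the whole incidence structure. -/
def ConnectedPLS {P L : Type*} (inc : P → L → Prop) : Prop :=
  SubConnected inc Set.univ Set.univ

/-- Collinearity of two points. -/
def Collin {P L : Type*} (inc : P → L → Prop) (a b : P) : Prop := ∃ l, inc a l ∧ inc b l

/-- A triangle: three pairwise collinear points which are not on a common line. -/
def IsTriangle {P L : Type*} (inc : P → L → Prop) (a b c : P) : Prop :=
  a ≠ b ∧ b ≠ c ∧ a ≠ c ∧ Collin inc a b ∧ Collin inc b c ∧ Collin inc a c ∧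
    ¬ ∃ l, inc a l ∧ inc b l ∧ inc c l

/-- The Shult axiom (Γ-space). -/
def Shultenian {P L : Type*} (inc : P → L → Prop) : Prop :=
  ∀ a b c d l, IsTriangle inc a b c → inc a l → inc b l → inc d l → Collin inc d c

/-- Degree of a point: the number of lines through it. -/
noncomputable def ptDeg {P L : Type*} (inc : P → L → Prop) (p : P) : ℕ :=
  Set.ncard {l | inc p l}

/-- Size of a line: the number of points on it. -/
noncomputable def lnSize {P L : Type*} (inc : P → L → Prop) (l : L) : ℕ :=
  Set.ncard {p | inc p l}

/-- `G` is a cyclic group (with distinguished generator `1`) which is either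
infinite or of even order greater than `2`. -/
def GoodGroup (G : Type*) [CommRing G] : Prop :=
  Nonempty (G ≃+* ℤ) ∨ ∃ k : ℕ, 2 < k ∧ Even k ∧ Nonempty (G ≃+* ZMod k)

/-- `I` is (as a cyclic group with generator `1`) either `ℤ` or `C_k`. -/
def CyclicIndex (I : Type*) [CommRing I] : Prop :=
  Nonempty (I ≃+* ℤ) ∨ ∃ k : ℕ, 0 < k ∧ Nonempty (I ≃+* ZMod k)

/-- Incidence on the disjoint union `S ⊕ L`, in either direction. -/
def dualInc {S L : Type*} (inc0 : S → L → Prop) : (S ⊕ L) → (S ⊕ L) → Prop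
  | Sum.inl a, Sum.inr b => inc0 a b
  | Sum.inr b, Sum.inl a => inc0 a b
  | _, _ => False

/-- Points of the multiplied structure `⊛_G(∘, M₀)`. -/
def starPt (G : Type*) [CommRing G] (S L : Type*) : Set (G × (S ⊕ L)) :=
  {p | (Even p.1 ∧ ∃ a : S, p.2 = Sum.inl a) ∨ (¬ Even p.1 ∧ ∃ l : L, p.2 = Sum.inr l)}

/-- Lines of the multiplied structure `⊛_G(∘, M₀)`. -/
def starLn (G : Type*) [CommRing G] (S L : Type*) : Set (G × (S ⊕ L)) :=
  {q | (Even q.1 ∧ ∃ l : L, q.2 = Sum.inr l) ∨ (¬ Even q.1 ∧ ∃ a : S, q.2 = Sum.inl a)}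

/-- Incidence of the multiplied structure `⊛_G(∘, M₀)`:
`(i,a) I [j,b]` iff (`i = j` and `a I₀ b` or `b I₀ a`) or (`i = j + 1` and `a = b`). -/
def starInc (G : Type*) [CommRing G] {S L : Type*} (inc0 : S → L → Prop) :
    ↥(starPt G S L) → ↥(starLn G S L) → Prop :=
  fun p l => (p.val.1 = l.val.1 ∧ dualInc inc0 p.val.2 l.val.2) ∨
    (p.val.1 = l.val.1 + 1 ∧ p.val.2 = l.val.2)

/-- The relation `⊹` on `⊛_G(∘, M₀)`: `p ⊹ l` iff `p I l` and `i = j + 1`. -/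
def starDod (G : Type*) [CommRing G] {S L : Type*} (inc0 : S → L → Prop)
    (p : ↥(starPt G S L)) (l : ↥(starLn G S L)) : Prop :=
  starInc G inc0 p l ∧ p.val.1 = l.val.1 + 1

/-- The relation `⊹₁`. -/
def dod1 {P L : Type*} (inc : P → L → Prop) (p : P) (l : L) : Prop :=
  inc p l ∧ ∃ q, q ≠ p ∧ inc q l ∧ ∀ k m n, l ≠ k → l ≠ m → l ≠ n → m ≠ n →
    inc q k → inc p m → inc p n → (∃ x, inc x k ∧ inc x m) → ¬ ∃ x, inc x k ∧ inc x n

/-- The relation `◁`: `a ◁ l` iff `a` is not on `l` and there is exactly one line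
through `a` missing `l`. -/
def corrRel {P L : Type*} (inc : P → L → Prop) (a : P) (l : L) : Prop :=
  ¬ inc a l ∧ ∃! m, inc a m ∧ ¬ ∃ x, inc x l ∧ inc x m

/-- The relation `⊹₂`. -/
def dod2 {P L : Type*} (inc : P → L → Prop) (p : P) (l : L) : Prop :=
  inc p l ∧ ∃ a, ¬ Collin inc p a ∧ corrRel inc a l

/-- The family `{B_i}` is a covering of the structure by connected closed
substructures satisfying conditions (1)-(7). -/
def GoodCover {P L I : Type*} (inc : P → L → Prop) (B' : I → Set P) (B'' : I → Set L) : Prop :=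
  (∀ p, ∃ i, p ∈ B' i) ∧ (∀ l, ∃ i, l ∈ B'' i) ∧
  (∀ i, IsClosedSub inc (B' i) (B'' i)) ∧
  (∀ i, SubConnected inc (B' i) (B'' i)) ∧
  (∀ i₁ i₂, (B' i₁ ∩ B' i₂).Nonempty → B' i₁ = B' i₂) ∧
  (∀ i₁ i₂, (B'' i₁ ∩ B'' i₂).Nonempty → B'' i₁ = B'' i₂) ∧
  (∀ i, ∀ d ∈ B' i, ∃ m, inc d m ∧ m ∉ B'' i) ∧
  (∀ i, ∀ m ∈ B'' i, ∃ d, inc d m ∧ d ∉ B' i) ∧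
  (∀ i, IsClosedSub inc (B' i)ᶜ (B'' i)ᶜ) ∧
  (∀ (i : I) (p : P) (m₁ m₂ m₃ : L) (d₁ d₂ d₃ : P),
    inc p m₁ → inc p m₂ → inc p m₃ → inc d₁ m₁ → inc d₂ m₂ → inc d₃ m₃ →
    m₁ ∈ B'' i → m₂ ∈ B'' i → m₃ ∈ B'' i → d₁ ∉ B' i → d₂ ∉ B' i → d₃ ∉ B' i →
    ∃ n, inc d₁ n ∧ inc d₂ n ∧ inc d₃ n) ∧
  (∀ (i : I) (n : L) (d₁ d₂ d₃ : P) (m₁ m₂ m₃ : L),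
    inc d₁ n → inc d₂ n → inc d₃ n → inc d₁ m₁ → inc d₂ m₂ → inc d₃ m₃ →
    d₁ ∈ B' i → d₂ ∈ B' i → d₃ ∈ B' i → m₁ ∉ B'' i → m₂ ∉ B'' i → m₃ ∉ B'' i →
    ∃ q, inc q m₁ ∧ inc q m₂ ∧ inc q m₃)

/-- The relation `ρ` on the index set: `j ρ i` iff `j ≠ i` and some line of `B''_j`
is incident with some point of `B'_i`. -/
def rhoRel {P L I : Type*} (inc : P → L → Prop) (B' : I → Set P) (B'' : I → Set L)
    (j i : I) : Prop :=
  j ≠ i ∧ ∃ l ∈ B'' j, ∃ a ∈ B' i, inc a l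

/-- The relation `⊹` determined by a covering: `a ⊹ m` iff `a I m` and no member of
the covering contains both `a` and `m`. -/
def dodRel {P L I : Type*} (inc : P → L → Prop) (B' : I → Set P) (B'' : I → Set L)
    (a : P) (m : L) : Prop :=
  inc a m ∧ ¬ ∃ i, a ∈ B' i ∧ m ∈ B'' i

/-- Incidence of the structure `⊛_{i∈I}(M_i, φ_i)` obtained by glueing the family
`(M_i)` along the correlations `φ_i`. -/
def glueInc {I : Type*} [CommRing I] {P Lf : I → Type*} (inc : ∀ i, P i → Lf i → Prop)
    (φ : ∀ i, Correlation (inc i) (inc (i + 1))) :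
    (Σ i, P i) → (Σ i, Lf i) → Prop :=
  fun p l => (∃ (i : I) (a : P i) (m : Lf i), p = ⟨i, a⟩ ∧ l = ⟨i, m⟩ ∧ inc i a m) ∨
    (∃ (j : I) (m : Lf j), p = ⟨j + 1, (φ j).toPoints m⟩ ∧ l = ⟨j, m⟩)

/-- The composite `φ_{n-1} ∘ ⋯ ∘ φ_1 ∘ φ_0` acting on the elements of `M₀`. -/
def corrChain {I : Type*} [CommRing I] {P Lf : I → Type*} (inc : ∀ i, P i → Lf i → Prop)
    (φ : ∀ i, Correlation (inc i) (inc (i + 1))) :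
    (n : ℕ) → (P 0 ⊕ Lf 0) → (P (n : I) ⊕ Lf (n : I))
  | 0 => cast (by rw [Nat.cast_zero])
  | n + 1 => fun x =>
      cast (by rw [Nat.cast_add_one])
        (Sum.elim (fun a => Sum.inr ((φ (n : I)).toLines a))
          (fun m => Sum.inl ((φ (n : I)).toPoints m)) (corrChain inc φ n x))

/-- The correlative multiplying `⊛_k(κ₀, M₀)`. -/
def corInc {S L : Type*} (k : ℕ) (inc0 : S → L → Prop) (kap : L → S) :
    ZMod k × S → ZMod k × L → Prop :=
  fun p l => (p.1 = l.1 ∧ inc0 p.2 l.2) ∨ (p.1 = l.1 + 1 ∧ p.2 = kap l.2)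

/-!
In `ℤ` and in `ZMod k` with `k` even every element is either even or odd, never both, so `i` and
`1 - i` have opposite parities and `(i, x) ↦ (1 - i, x)` exchanges the points and the lines of
`⊛_G(∘, M₀)`. It turns `i = j` into `1 - j = 1 - i` and `i = j + 1` into `1 - j = (1 - i) + 1`,
and the incidence of `M₀ ⊕ M₀°` is symmetric, so it reverses incidence; it is an involution.
-/

theorem not_even_iff_odd_of_intCast_surjective {R : Type*} [Ring R]
    (hR : Function.Surjective (Int.cast : ℤ → R)) (f : R →+* ZMod 2) (x : R) :
    ¬Even x ↔ Odd x := by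
  constructor
  · intro hx
    obtain ⟨n, rfl⟩ := hR x
    rcases Int.even_or_odd n with hn | hn
    · exact absurd (by simpa using hn.map (Int.castRingHom R)) hx
    · simpa using hn.map (Int.castRingHom R)
  · rintro ⟨m, rfl⟩ ⟨r, hr⟩
    have key : ∀ a b : ZMod 2, 2 * a + 1 ≠ b + b := by decide
    exact key (f m) (f r) (by simpa [map_ofNat] using congrArg f hr)

theorem GoodGroup.not_even_iff_odd {G : Type*} [CommRing G] (hG : GoodGroup G) (i : G) :
    ¬Even i ↔ Odd i := by
  rcases hG with ⟨⟨e⟩⟩ | ⟨k, -, hk, ⟨e⟩⟩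
  · exact not_even_iff_odd_of_intCast_surjective (fun x => ⟨e x, e.injective (by simp)⟩)
      ((Int.castRingHom (ZMod 2)).comp e.toRingHom) i
  · refine not_even_iff_odd_of_intCast_surjective (fun x => ?_)
      ((ZMod.castHom (even_iff_two_dvd.mp hk) (ZMod 2)).comp e.toRingHom) i
    obtain ⟨n, hn⟩ := ZMod.intCast_surjective (e x)
    exact ⟨n, e.injective (by simp [hn])⟩

theorem GoodGroup.even_one_sub_iff {G : Type*} [CommRing G] (hG : GoodGroup G) (i : G) :
    Even (1 - i) ↔ ¬Even i := by
  rw [hG.not_even_iff_odd, ← even_neg, neg_sub, even_sub_one]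

theorem dualInc_comm {S L : Type*} (inc0 : S → L → Prop) (x y : S ⊕ L) :
    dualInc inc0 x y ↔ dualInc inc0 y x := by
  cases x <;> cases y <;> rfl

-- An involution by `toPerm`, so that `(reflect G X).symm` unfolds to `reflect G X` itself.
def reflect (G X : Type*) [CommRing G] : Equiv.Perm (G × X) :=
  Function.Involutive.toPerm (fun p => (1 - p.1, p.2)) fun p => by simp

@[simp]
theorem reflect_apply {G X : Type*} [CommRing G] (p : G × X) :
    reflect G X p = (1 - p.1, p.2) :=
  rfl

theorem GoodGroup.reflect_mem_starLn_iff {G : Type*} [CommRing G] (hG : GoodGroup G)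
    {S L : Type*} (p : G × (S ⊕ L)) : reflect G (S ⊕ L) p ∈ starLn G S L ↔ p ∈ starPt G S L := by
  simp only [reflect_apply, starLn, starPt, Set.mem_ofPred_eq, hG.even_one_sub_iff, not_not]
  tauto

theorem starInc_reflect_iff {G : Type*} [CommRing G] {S L : Type*} (inc0 : S → L → Prop)
    (p p' : starPt G S L) (l l' : starLn G S L)
    (hp' : p'.val = reflect G (S ⊕ L) l.val) (hl' : l'.val = reflect G (S ⊕ L) p.val) :
    starInc G inc0 p' l' ↔ starInc G inc0 p l := by
  have shift_iff (a b : G) : 1 - b = 1 - a + 1 ↔ a = b + 1 := by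
    constructor <;> intro h <;> linear_combination h
  simp only [starInc, hp', hl', reflect_apply, sub_right_inj, shift_iff, eq_comm,
    dualInc_comm inc0 l.val.2]

def GoodGroup.starReflect {G : Type*} [CommRing G] (hG : GoodGroup G) (S L : Type*) :
    starPt G S L ≃ starLn G S L :=
  (reflect G (S ⊕ L)).subtypeEquiv fun p => (hG.reflect_mem_starLn_iff p).symm

theorem star_involutive_correlation_general {G : Type} [CommRing G] (hG : GoodGroup G)
    {S L : Type} (inc0 : S → L → Prop) :
    ∃ κ : Correlation (starInc G inc0) (starInc G inc0),
      (∀ p : ↥(starPt G S L), (κ.toLines p).val = (1 - p.val.1, p.val.2)) ∧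
      (∀ l : ↥(starLn G S L), (κ.toPoints l).val = (1 - l.val.1, l.val.2)) ∧
      (∀ p : ↥(starPt G S L), κ.toPoints (κ.toLines p) = p) ∧
      (∀ l : ↥(starLn G S L), κ.toLines (κ.toPoints l) = l) := by
  let κ' := hG.starReflect S L
  let κ : Correlation (starInc G inc0) (starInc G inc0) :=
    ⟨κ', κ'.symm, fun p l => (starInc_reflect_iff inc0 p _ l _ rfl rfl).symm⟩
  exact ⟨κ, fun _ => rfl, fun _ => rfl, κ'.symm_apply_apply, κ'.apply_symm_apply⟩

/-- the map `κ((i,x)) = (1-i, x)` is an involutive correlation of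
`⊛_G(∘, M₀)`; consequently `⊛_G(∘, M₀)` is self-dual. -/
theorem star_involutive_correlation {G : Type} [CommRing G] (hG : GoodGroup G)
    {S L : Type} (inc0 : S → L → Prop) (hPLS : IsPLS inc0) :
    ∃ κ : Correlation (starInc G inc0) (starInc G inc0),
      (∀ p : ↥(starPt G S L), (κ.toLines p).val = (1 - p.val.1, p.val.2)) ∧
      (∀ l : ↥(starLn G S L), (κ.toPoints l).val = (1 - l.val.1, l.val.2)) ∧
      (∀ p : ↥(starPt G S L), κ.toPoints (κ.toLines p) = p) ∧
      (∀ l : ↥(starLn G S L), κ.toLines (κ.toPoints l) = l) :=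
  star_involutive_correlation_general hG inc0
end

section
/- Let M₀ be a partial linear space, M₀° its dual, and G a cyclic group that is either infinite or of even order greater than 2. Then ⊛_G(∘, M₀) is isomorphic to ⊛_G(∘, M₀°); an isomorphism is given by the map δ with δ((i,a)) = (i+1, a) on both points and lines. -/
/-!
Shifting the index by one flips parity in `G` (for `ℤ`, and for `ZMod k` because `k` is even),
so `(i, a) ↦ (i + 1, a)` sends the points `{i} × S₀` or `{i} × L₀` of `⊛_G(∘, M₀)` to points of
`⊛_G(∘, M₀°)`, and likewise for lines; both clauses of the incidence, `i = j ∧ a I₀ b` and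
`i = j + 1 ∧ a = b`, are invariant under shifting both indices.
-/

theorem ZMod.even_intCast_iff {k : ℕ} (hk : Even k) (n : ℤ) : Even (n : ZMod k) ↔ Even n := by
  refine ⟨fun ⟨r, hr⟩ => ?_, fun hn => hn.map (Int.castRingHom (ZMod k))⟩
  obtain ⟨m, rfl⟩ := ZMod.intCast_surjective r
  rw [← Int.cast_add, ZMod.intCast_eq_intCast_iff_dvd_sub] at hr
  have hk2 : (2 : ℤ) ∣ m + m - n :=
    (Int.natCast_dvd_natCast.mpr (even_iff_two_dvd.mp hk)).trans hr
  simpa using (Even.add_self m).sub (even_iff_two_dvd.mpr hk2)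

theorem ZMod.even_add_one_iff {k : ℕ} (hk : Even k) (x : ZMod k) :
    Even (x + 1) ↔ ¬ Even x := by
  obtain ⟨n, rfl⟩ := ZMod.intCast_surjective x
  rw [← Int.cast_one, ← Int.cast_add, ZMod.even_intCast_iff hk, ZMod.even_intCast_iff hk,
    Int.even_add_one]

theorem RingEquiv.even_map_iff {R R' : Type*} [Semiring R] [Semiring R'] (e : R ≃+* R') (x : R) :
    Even (e x) ↔ Even x :=
  ⟨fun h => by simpa using h.map e.symm, fun h => h.map e⟩

theorem GoodGroup.even_add_one_iff {G : Type*} [CommRing G] (hG : GoodGroup G) (i : G) :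
    Even (i + 1) ↔ ¬ Even i := by
  rcases hG with ⟨⟨e⟩⟩ | ⟨k, -, hk, ⟨e⟩⟩
  · rw [← e.even_map_iff, ← e.even_map_iff i, map_add, map_one, Int.even_add_one]
  · rw [← e.even_map_iff, ← e.even_map_iff i, map_add, map_one, ZMod.even_add_one_iff hk]

def starShift (G : Type*) [CommRing G] (S L : Type*) : G × (S ⊕ L) ≃ G × (L ⊕ S) :=
  (Equiv.addRight 1).prodCongr (Equiv.sumComm S L)

section StarShift

variable {G : Type*} [CommRing G] {S L : Type*}

theorem mem_starPt_iff_starShift_mem (hflip : ∀ i : G, Even (i + 1) ↔ ¬ Even i)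
    (x : G × (S ⊕ L)) : x ∈ starPt G S L ↔ starShift G S L x ∈ starPt G L S := by
  rcases x with ⟨i, a | l⟩ <;> simp [starPt, starShift, hflip]

theorem mem_starLn_iff_starShift_mem (hflip : ∀ i : G, Even (i + 1) ↔ ¬ Even i)
    (x : G × (S ⊕ L)) : x ∈ starLn G S L ↔ starShift G S L x ∈ starLn G L S := by
  rcases x with ⟨i, a | l⟩ <;> simp [starLn, starShift, hflip]

theorem dualInc_swap (inc0 : S → L → Prop) (x y : S ⊕ L) :
    dualInc (fun (l : L) (a : S) => inc0 a l) x.swap y.swap ↔ dualInc inc0 x y := by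
  cases x <;> cases y <;> rfl

def starDualIso (hflip : ∀ i : G, Even (i + 1) ↔ ¬ Even i) (inc0 : S → L → Prop) :
    IncIso (starInc G inc0) (starInc G (fun (l : L) (a : S) => inc0 a l)) where
  pt := (starShift G S L).subtypeEquiv (mem_starPt_iff_starShift_mem hflip)
  ln := (starShift G S L).subtypeEquiv (mem_starLn_iff_starShift_mem hflip)
  pres p l := by
    simp only [starInc, Equiv.subtypeEquiv_apply, starShift, Equiv.prodCongr_apply,
      Prod.map, Equiv.coe_addRight, Equiv.sumComm_apply, add_left_inj, dualInc_swap,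
      Sum.swap_leftInverse.injective.eq_iff]

end StarShift

theorem star_iso_star_dual_general {G : Type} [CommRing G] (hG : GoodGroup G)
    {S L : Type} (inc0 : S → L → Prop) :
    ∃ δ : IncIso (starInc G inc0) (starInc G (fun (l : L) (a : S) => inc0 a l)),
      (∀ p : ↥(starPt G S L), (δ.pt p).val = (p.val.1 + 1, p.val.2.swap)) ∧
      (∀ l : ↥(starLn G S L), (δ.ln l).val = (l.val.1 + 1, l.val.2.swap)) :=
  ⟨starDualIso hG.even_add_one_iff inc0, fun _ => rfl, fun _ => rfl⟩

/-- `⊛_G(∘, M₀) ≅ ⊛_G(∘, M₀°)`, via `δ((i,a)) = (i+1, a)`. -/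
theorem star_iso_star_dual {G : Type} [CommRing G] (hG : GoodGroup G)
    {S L : Type} (inc0 : S → L → Prop) (hPLS : IsPLS inc0) :
    ∃ δ : IncIso (starInc G inc0) (starInc G (fun (l : L) (a : S) => inc0 a l)),
      (∀ p : ↥(starPt G S L), (δ.pt p).val = (p.val.1 + 1, p.val.2.swap)) ∧
      (∀ l : ↥(starLn G S L), (δ.ln l).val = (l.val.1 + 1, l.val.2.swap)) :=
  star_iso_star_dual_general hG inc0
end

section
/- Let M₀ be a partial linear space, G a cyclic group that is either infinite or of even order greater than 2, and i ∈ G. Then the image im(ε_i) of M₀ under the embedding ε_i is a closed substructure of ⊛_G(∘, M₀), and it is isomorphic to M₀ if i is even and to the dual M₀° if i is odd. -/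
section StarLayers

variable {G : Type*} [CommRing G] {S L : Type*}

theorem mk_mem_starPt_of_even {i : G} (hi : Even i) (x : S ⊕ L) :
    (i, x) ∈ starPt G S L ↔ ∃ a : S, x = Sum.inl a := by
  simp [starPt, hi]

theorem mk_mem_starPt_of_odd {i : G} (hi : ¬ Even i) (x : S ⊕ L) :
    (i, x) ∈ starPt G S L ↔ ∃ l : L, x = Sum.inr l := by
  simp [starPt, hi]

theorem mk_mem_starLn_of_even {i : G} (hi : Even i) (x : S ⊕ L) :
    (i, x) ∈ starLn G S L ↔ ∃ l : L, x = Sum.inr l := by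
  simp [starLn, hi]

theorem mk_mem_starLn_of_odd {i : G} (hi : ¬ Even i) (x : S ⊕ L) :
    (i, x) ∈ starLn G S L ↔ ∃ a : S, x = Sum.inl a := by
  simp [starLn, hi]

theorem starPt_snd_ne_starLn_snd {p : starPt G S L} {l : starLn G S L}
    (h : p.val.1 = l.val.1) : p.val.2 ≠ l.val.2 := by
  rcases p.prop with ⟨hp, a, ha⟩ | ⟨hp, m, hm⟩ <;>
    rcases l.prop with ⟨hl, n, hn⟩ | ⟨hl, b, hb⟩
  · simp [ha, hn]
  · exact absurd (h ▸ hp) hl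
  · exact absurd (h ▸ hl) hp
  · simp [hm, hb]

theorem starInc_iff_dualInc_of_fst_eq (inc0 : S → L → Prop) {p : starPt G S L}
    {l : starLn G S L} (h : p.val.1 = l.val.1) :
    starInc G inc0 p l ↔ dualInc inc0 p.val.2 l.val.2 := by
  simp [starInc, h, starPt_snd_ne_starLn_snd h]

theorem starInc.snd_eq_of_fst_ne {inc0 : S → L → Prop} {p : starPt G S L}
    {l : starLn G S L} (h : starInc G inc0 p l) (hne : p.val.1 ≠ l.val.1) :
    p.val.2 = l.val.2 := by
  rcases h with ⟨heq, _⟩ | ⟨_, hsnd⟩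
  · exact absurd heq hne
  · exact hsnd

/-- The only incidences between different layers are `(j + 1, x) I [j, x]`, so two
distinct elements of a layer never share a neighbour outside it. -/
theorem starInc_layer_isClosedSub (inc0 : S → L → Prop) (i : G) :
    IsClosedSub (starInc G inc0) {p : starPt G S L | p.val.1 = i}
      {l : starLn G S L | l.val.1 = i} := by
  constructor
  · intro a₁ a₂ l (h₁ : a₁.val.1 = i) (h₂ : a₂.val.1 = i) hne hinc₁ hinc₂
    show l.val.1 = i
    by_contra hl
    refine hne (Subtype.ext (Prod.ext (h₁.trans h₂.symm) ?_))
    exact (hinc₁.snd_eq_of_fst_ne (h₁ ▸ Ne.symm hl)).trans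
      (hinc₂.snd_eq_of_fst_ne (h₂ ▸ Ne.symm hl)).symm
  · intro l₁ l₂ a (h₁ : l₁.val.1 = i) (h₂ : l₂.val.1 = i) hne hinc₁ hinc₂
    show a.val.1 = i
    by_contra ha
    refine hne (Subtype.ext (Prod.ext (h₁.trans h₂.symm) ?_))
    exact (hinc₁.snd_eq_of_fst_ne (h₁ ▸ ha)).symm.trans (hinc₂.snd_eq_of_fst_ne (h₂ ▸ ha))

end StarLayers

noncomputable def sliceEquiv {G Y α : Type*} {X : Set (G × Y)} (i : G) (f : α ↪ Y)
    (hX : ∀ y, (i, y) ∈ X ↔ ∃ a, y = f a) : α ≃ {x : X // x.val.1 = i} :=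
  Equiv.ofBijective (fun a => ⟨⟨(i, f a), (hX (f a)).2 ⟨a, rfl⟩⟩, rfl⟩) <| by
    refine ⟨fun a b hab => f.injective ?_, fun ⟨⟨⟨j, y⟩, hx⟩, hj⟩ => ?_⟩
    · simpa using congrArg (fun x => x.val.val.2) hab
    · obtain rfl : j = i := hj
      obtain ⟨a, rfl⟩ := (hX y).1 hx
      exact ⟨a, rfl⟩

section StarLayerIso

variable {G : Type*} [CommRing G] {S L : Type*} (inc0 : S → L → Prop) {i : G}

/-- For even `i` the embedding `ε_i` is `a ↦ (i, a)`, `l ↦ [i, l]`. -/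
noncomputable def starLayerIsoOfEven (hi : Even i) :
    IncIso inc0 (fun (a : {p : starPt G S L // p.val.1 = i})
      (l : {q : starLn G S L // q.val.1 = i}) => starInc G inc0 a.val l.val) where
  pt := sliceEquiv i Function.Embedding.inl (mk_mem_starPt_of_even hi)
  ln := sliceEquiv i Function.Embedding.inr (mk_mem_starLn_of_even hi)
  pres _ _ := by rw [starInc_iff_dualInc_of_fst_eq inc0 rfl]; rfl

/-- For odd `i` the embedding `ε_i` is `a ↦ [i, a]`, `l ↦ (i, l)`. -/
noncomputable def starLayerIsoOfOdd (hi : ¬ Even i) :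
    IncIso (fun (l : L) (a : S) => inc0 a l) (fun (a : {p : starPt G S L // p.val.1 = i})
      (l : {q : starLn G S L // q.val.1 = i}) => starInc G inc0 a.val l.val) where
  pt := sliceEquiv i Function.Embedding.inr (mk_mem_starPt_of_odd hi)
  ln := sliceEquiv i Function.Embedding.inl (mk_mem_starLn_of_odd hi)
  pres _ _ := by rw [starInc_iff_dualInc_of_fst_eq inc0 rfl]; rfl

end StarLayerIso

theorem star_image_closed_substructure_general {G : Type} [CommRing G]
    {S L : Type} (inc0 : S → L → Prop) (i : G) :
    IsClosedSub (starInc G inc0) {p : ↥(starPt G S L) | p.val.1 = i}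
      {l : ↥(starLn G S L) | l.val.1 = i} ∧
    (Even i → Nonempty (IncIso inc0
      (fun (a : {p : ↥(starPt G S L) // p.val.1 = i})
           (l : {q : ↥(starLn G S L) // q.val.1 = i}) => starInc G inc0 a.val l.val))) ∧
    (¬ Even i → Nonempty (IncIso (fun (l : L) (a : S) => inc0 a l)
      (fun (a : {p : ↥(starPt G S L) // p.val.1 = i})
           (l : {q : ↥(starLn G S L) // q.val.1 = i}) => starInc G inc0 a.val l.val))) :=
  ⟨starInc_layer_isClosedSub inc0 i, fun hi => ⟨starLayerIsoOfEven inc0 hi⟩,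
    fun hi => ⟨starLayerIsoOfOdd inc0 hi⟩⟩

/-- the image of `M₀` under the embedding `ε_i` is a closed
substructure of `⊛_G(∘, M₀)`, isomorphic to `M₀` for even `i` and to `M₀°` for odd
`i`. -/
theorem star_image_closed_substructure {G : Type} [CommRing G] (hG : GoodGroup G)
    {S L : Type} (inc0 : S → L → Prop) (hPLS : IsPLS inc0) (i : G) :
    IsClosedSub (starInc G inc0) {p : ↥(starPt G S L) | p.val.1 = i}
      {l : ↥(starLn G S L) | l.val.1 = i} ∧
    (Even i → Nonempty (IncIso inc0
      (fun (a : {p : ↥(starPt G S L) // p.val.1 = i})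
           (l : {q : ↥(starLn G S L) // q.val.1 = i}) => starInc G inc0 a.val l.val))) ∧
    (¬ Even i → Nonempty (IncIso (fun (l : L) (a : S) => inc0 a l)
      (fun (a : {p : ↥(starPt G S L) // p.val.1 = i})
           (l : {q : ↥(starLn G S L) // q.val.1 = i}) => starInc G inc0 a.val l.val))) :=
  star_image_closed_substructure_general inc0 i
end

section
/- Let M = ⟨M, 𝓛, I⟩ be a connected partial linear space covered by a family {B_i = ⟨B'_i, B''_i⟩ : i ∈ I} of connected closed substructures satisfying conditions (1)–(7), and let ρ be the induced bijection of I. Then for every fixed i₀ ∈ I the map s ↦ ρ^s(i₀) (s ranging over ℤ) is surjective onto I, and it induces a bijection of ℤ onto I if the cyclic group ⟨ρ⟩ generated by ρ is infinite, and a bijection of C_k onto I, where k = |I|, if ⟨ρ⟩ is finite; in other words, the cyclic group ⟨ρ⟩ acts simply transitively on I, so I carries the structure of C_k or ℤ under which j ρ i iff i = j + 1. -/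
/-!
If a line of `B_j` passes through a point of `B_i`, then `j = i` or `j ρ i`, so `i` and `j`
lie in one `⟨ρ⟩`-orbit. Following a chain of incidences, which exists since `M` is connected,
puts any two blocks into one orbit. A transitive abelian permutation group acts freely.
-/

open Equiv Relation

theorem Equiv.Perm.zpow_eq_zpow_of_apply_eq {α : Type*} {f : Perm α} {x : α}
    (htrans : ∀ y, f.SameCycle x y) {s t : ℤ} (hst : (f ^ s) x = (f ^ t) x) : f ^ s = f ^ t := by
  ext y
  obtain ⟨u, rfl⟩ := htrans y
  rw [zpow_apply_comm f s u, hst, zpow_apply_comm f u t]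

section Blocks

variable {P L I : Type*} {inc : P → L → Prop} {B' : I → Set P} {B'' : I → Set L}
  {f : Perm I}

def InBlock (B' : I → Set P) (B'' : I → Set L) (x : P ⊕ L) (i : I) : Prop :=
  Sum.elim (· ∈ B' i) (· ∈ B'' i) x

theorem GoodCover.exists_inBlock (hcov : GoodCover inc B' B'') (x : P ⊕ L) :
    ∃ i, InBlock B' B'' x i := by
  obtain ⟨hcovP, hcovL, -⟩ := hcov
  rcases x with a | l
  exacts [hcovP a, hcovL l]

theorem GoodCover.exists_incStep (hcov : GoodCover inc B' B'') (x : P ⊕ L) :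
    ∃ y, IncStep inc Set.univ Set.univ x y := by
  obtain ⟨hcovP, hcovL, -, -, -, -, hline, hpoint, -⟩ := hcov
  rcases x with a | l
  · obtain ⟨i, ha⟩ := hcovP a
    obtain ⟨l, hal, -⟩ := hline i a ha
    exact ⟨.inr l, a, l, trivial, trivial, hal, .inl ⟨rfl, rfl⟩⟩
  · obtain ⟨i, hl⟩ := hcovL l
    obtain ⟨a, hal, -⟩ := hpoint i l hl
    exact ⟨.inl a, a, l, trivial, trivial, hal, .inr ⟨rfl, rfl⟩⟩

variable (hf : ∀ j i, rhoRel inc B' B'' j i ↔ f j = i)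
include hf

theorem nonempty_block_of_rhoRel (i : I) : (B' i).Nonempty := by
  obtain ⟨-, -, -, a, ha, -⟩ := (hf (f.symm i) i).2 (f.apply_symm_apply i)
  exact ⟨a, ha⟩

theorem sameCycle_of_inc {a : P} {l : L} {i j : I} (hl : l ∈ B'' j) (ha : a ∈ B' i)
    (hal : inc a l) : f.SameCycle j i := by
  by_cases hji : j = i
  · exact hji ▸ .refl f j
  · exact ⟨1, by simpa using (hf j i).1 ⟨hji, l, hl, a, ha, hal⟩⟩

theorem sameCycle_of_incStep {x y : P ⊕ L} (hxy : IncStep inc Set.univ Set.univ x y) {i j : I}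
    (hx : InBlock B' B'' x i) (hy : InBlock B' B'' y j) : f.SameCycle i j := by
  obtain ⟨a, l, -, -, hal, ⟨rfl, rfl⟩ | ⟨rfl, rfl⟩⟩ := hxy
  · exact (sameCycle_of_inc hf hy hx hal).symm
  · exact sameCycle_of_inc hf hx hy hal

variable (hcover : ∀ x, ∃ i, InBlock B' B'' x i)
  (hinc : ∀ x, ∃ y, IncStep inc Set.univ Set.univ x y)
include hcover hinc

theorem sameCycle_of_inBlock {x : P ⊕ L} {i j : I} (hi : InBlock B' B'' x i)
    (hj : InBlock B' B'' x j) : f.SameCycle i j := by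
  obtain ⟨y, hxy⟩ := hinc x
  obtain ⟨k, hk⟩ := hcover y
  exact (sameCycle_of_incStep hf hxy hi hk).trans (sameCycle_of_incStep hf hxy hj hk).symm

theorem sameCycle_of_reflTransGen {x y : P ⊕ L}
    (hxy : ReflTransGen (IncStep inc Set.univ Set.univ) x y) {i j : I}
    (hx : InBlock B' B'' x i) (hy : InBlock B' B'' y j) : f.SameCycle i j := by
  induction hxy generalizing j with
  | refl => exact sameCycle_of_inBlock hf hcover hinc hx hy
  | @tail b _ _ hstep ih =>
    obtain ⟨k, hk⟩ := hcover b
    exact (ih hk).trans (sameCycle_of_incStep hf hstep hk hy)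

theorem sameCycle_of_connectedPLS (hconn : ConnectedPLS inc) (i j : I) : f.SameCycle i j := by
  obtain ⟨a, ha⟩ := nonempty_block_of_rhoRel hf i
  obtain ⟨b, hb⟩ := nonempty_block_of_rhoRel hf j
  exact sameCycle_of_reflTransGen hf hcover hinc (hconn (.inl a) (.inl b) trivial trivial) ha hb

end Blocks

theorem cover_rho_simply_transitive_general {M Λ I : Type} (inc : M → Λ → Prop)
    (B' : I → Set M) (B'' : I → Set Λ)
    (hconn : ConnectedPLS inc) (hcov : GoodCover inc B' B'')
    (f : Equiv.Perm I) (hf : ∀ j i : I, rhoRel inc B' B'' j i ↔ f j = i) :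
    ∀ i₀ : I, (∀ i : I, ∃ s : ℤ, (f ^ s) i₀ = i) ∧
      (∀ s t : ℤ, (f ^ s) i₀ = (f ^ t) i₀ → f ^ s = f ^ t) := by
  intro i₀
  have htrans : ∀ i, f.SameCycle i₀ i :=
    sameCycle_of_connectedPLS hf hcov.exists_inBlock hcov.exists_incStep hconn i₀
  exact ⟨htrans, fun _ _ => Perm.zpow_eq_zpow_of_apply_eq htrans⟩

/-- in a connected PLS covered by a family of connected closed
substructures satisfying (1)-(7), the cyclic group generated by the bijection `ρ`
acts simply transitively on `I`: for each `i₀`, the orbit map `s ↦ ρ^s(i₀)` is onto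
`I` and identifies `I` with `⟨ρ⟩` (that is, with `ℤ` or with `C_k`, `k = |I|`). -/
theorem cover_rho_simply_transitive {M Λ I : Type} (inc : M → Λ → Prop)
    (B' : I → Set M) (B'' : I → Set Λ)
    (hPLS : IsPLS inc) (hconn : ConnectedPLS inc) (hcov : GoodCover inc B' B'')
    (f : Equiv.Perm I) (hf : ∀ j i : I, rhoRel inc B' B'' j i ↔ f j = i) :
    ∀ i₀ : I, (∀ i : I, ∃ s : ℤ, (f ^ s) i₀ = i) ∧
      (∀ s t : ℤ, (f ^ s) i₀ = (f ^ t) i₀ → f ^ s = f ^ t) :=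
  cover_rho_simply_transitive_general inc B' B'' hconn hcov f hf
end

section
/- Let I = C_k or I = ℤ, let (M_i)_{i∈I} be a family of connected partial linear spaces, let φ_i be a correlation of M_i onto M_{i+1} for each i ∈ I, and let ξ_i = (ξ'_i, ξ''_i) be a correlation of M_i onto M_{−i} for each i ∈ I. Assume φ''_{−i} ∘ ξ'_i ∘ φ''_{i−1} = ξ''_i for all i. Then the map κ = (κ', κ'') given by κ'((i,x)) = [−i, ξ'_i(x)] and κ''([i,y]) = (−i, ξ''_i(y)) is a correlation of ⊛_{i∈I}(M_i, φ_i) onto itself; consequently ⊛_{i∈I}(M_i, φ_i) is self-dual. -/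
/-!
An incidence of the glued structure either lies inside one fibre, `(i, a) I [i, m]` with
`a I_i m`, or is a glueing incidence `(j + 1, φ''_j m) I [j, m]`. The map `κ`, acting as `ξ_i`
over `i ↦ -i`, turns fibre incidences into fibre incidences because each `ξ_i` is a
correlation. A glueing incidence at `j` goes to a pair over `-j` and `-(j + 1)`, i.e. a
candidate glueing incidence at `-(j + 1)`, and the compatibility of `ξ` with `φ` says exactly
that it is one; since the `φ''` and `ξ'` are injective, nothing else is.
-/

section Glue

variable {I : Type*} [CommRing I] {P Lf : I → Type*} {inc : ∀ i, P i → Lf i → Prop}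
  (φ : ∀ i, Correlation (inc i) (inc (i + 1)))

theorem glueInc_mk_iff {i j : I} (x : P i) (m : Lf j) :
    glueInc inc φ ⟨i, x⟩ ⟨j, m⟩ ↔
      (∃ h : i = j, inc j (cast (congrArg P h) x) m) ∨
        (i = j + 1 ∧ HEq x ((φ j).toPoints m)) := by
  refine or_congr ⟨?_, ?_⟩ ⟨?_, ?_⟩
  · rintro ⟨k, a, n, hx, hm, hinc⟩
    obtain ⟨rfl, hx⟩ := Sigma.mk.inj_iff.mp hx
    obtain ⟨rfl, hm⟩ := Sigma.mk.inj_iff.mp hm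
    cases hx; cases hm
    exact ⟨rfl, hinc⟩
  · rintro ⟨rfl, hinc⟩
    exact ⟨i, x, m, rfl, rfl, hinc⟩
  · rintro ⟨k, n, hx, hm⟩
    obtain ⟨rfl, hm⟩ := Sigma.mk.inj_iff.mp hm
    cases hm
    exact Sigma.mk.inj_iff.mp hx
  · rintro ⟨rfl, hx⟩
    exact ⟨j, m, by rw [eq_of_heq hx], rfl⟩

variable {φ}

theorem glueInc_fiber_iff_neg (ξ : ∀ i, Correlation (inc i) (inc (-i))) {i j : I}
    (x : P i) (m : Lf j) :
    (∃ h : i = j, inc j (cast (congrArg P h) x) m) ↔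
      ∃ h : -j = -i, inc (-i) (cast (congrArg P h) ((ξ j).toPoints m)) ((ξ i).toLines x) := by
  rcases eq_or_ne i j with rfl | hne
  · simpa using (ξ i).rev x m
  · simp [hne, hne.symm]

theorem glueInc_edge_iff_neg (ξ : ∀ i, Correlation (inc i) (inc (-i))) {j : I}
    (hcomp : ∀ m : Lf j,
      cast (congrArg P (by ring : -(j + 1) + 1 = -j))
        ((φ (-(j + 1))).toPoints ((ξ (j + 1)).toLines ((φ j).toPoints m)))
        = (ξ j).toPoints m)
    {i : I} (x : P i) (m : Lf j) :
    (i = j + 1 ∧ HEq x ((φ j).toPoints m)) ↔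
      (-j = -i + 1 ∧ HEq ((ξ j).toPoints m) ((φ (-i)).toPoints ((ξ i).toLines x))) := by
  by_cases hi : i = j + 1
  · subst hi
    have hidx : -j = -(j + 1) + 1 := by ring
    rw [← hcomp m, cast_heq_iff_heq, heq_iff_eq, heq_iff_eq, (Equiv.injective _).eq_iff,
      (Equiv.injective _).eq_iff]
    simp only [hidx, true_and]
    exact eq_comm
  · have hi' : -j ≠ -i + 1 := fun h => hi (by linear_combination h)
    simp [hi, hi']

def glueNegCorrelation (ξ : ∀ i, Correlation (inc i) (inc (-i)))
    (hcomp : ∀ (i : I) (m : Lf i),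
      cast (congrArg P (by ring : -(i + 1) + 1 = -i))
        ((φ (-(i + 1))).toPoints ((ξ (i + 1)).toLines ((φ i).toPoints m)))
        = (ξ i).toPoints m) :
    Correlation (glueInc inc φ) (glueInc inc φ) where
  toLines := Equiv.sigmaCongr (Equiv.neg I) fun i => (ξ i).toLines
  toPoints := Equiv.sigmaCongr (Equiv.neg I) fun i => (ξ i).toPoints
  rev := by
    rintro ⟨i, x⟩ ⟨j, m⟩
    exact (glueInc_mk_iff φ x m).trans <|
      (or_congr (glueInc_fiber_iff_neg ξ x m) (glueInc_edge_iff_neg ξ (hcomp j) x m)).trans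
        (glueInc_mk_iff φ _ _).symm

end Glue

/-- given correlations `ξ_i : M_i → M_{-i}` compatible with the
glueing correlations `φ_i` (namely `φ''_{-i} ∘ ξ'_i ∘ φ''_{i-1} = ξ''_{i-1}`,
written below with `i` shifted by one), the map `κ((i,x)) = (-i, ξ_i(x))` is a
correlation of `⊛_{i∈I}(M_i, φ_i)` onto itself; consequently `⊛_{i∈I}(M_i, φ_i)`
is self-dual. -/
theorem glue_self_dual {I : Type} [CommRing I]
    (P Lf : I → Type) (inc : ∀ i, P i → Lf i → Prop)
    (φ : ∀ i, Correlation (inc i) (inc (i + 1)))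
    (ξ : ∀ i, Correlation (inc i) (inc (-i)))
    (hcomp : ∀ (i : I) (m : Lf i),
      cast (congrArg P (by ring : -(i + 1) + 1 = -i))
        ((φ (-(i + 1))).toPoints ((ξ (i + 1)).toLines ((φ i).toPoints m)))
        = (ξ i).toPoints m) :
    ∃ κ : Correlation (glueInc inc φ) (glueInc inc φ),
      (∀ (i : I) (x : P i), κ.toLines ⟨i, x⟩ = ⟨-i, (ξ i).toLines x⟩) ∧
      (∀ (i : I) (y : Lf i), κ.toPoints ⟨i, y⟩ = ⟨-i, (ξ i).toPoints y⟩) :=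
  ⟨glueNegCorrelation ξ hcomp, fun _ _ => rfl, fun _ _ => rfl⟩
end
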